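/- Let d ≥ 2, let C be a d-copula, let u ∈ [0,1]^d, and let i, j ∈ {1,…,d}. Let τ_{ij} denote the transposition of i and j, and u_{τ_{ij}} the vector u with components i and j interchanged. Then |C(u) − C(u_{τ_{ij}})| ≤ |u_i − u_j|. -/

import Mathlib

/-- A `d`-copula: a function `C : [0,1]^d → ℝ` (defined on all of `(Fin d → ℝ)`,
with the copula conditions imposed on `[0,1]^d`) that is grounded, has uniform
one-dimensional margins, and is `d`-increasing. -/
def IsCopula (d : ℕ) (C : (Fin d → ℝ) → ℝ) : Prop :=
  (∀ u : Fin d → ℝ, (∀ i, u i ∈ Set.Icc (0:ℝ) 1) → (∃ i, u i = 0) → C u = 0) ∧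
  (∀ u : Fin d → ℝ, (∀ i, u i ∈ Set.Icc (0:ℝ) 1) →
    ∀ i : Fin d, (∀ j, j ≠ i → u j = 1) → C u = u i) ∧
  (∀ a b : Fin d → ℝ, (∀ i, a i ∈ Set.Icc (0:ℝ) 1) → (∀ i, b i ∈ Set.Icc (0:ℝ) 1) →
    (∀ i, a i ≤ b i) →
    0 ≤ ∑ S : Finset (Fin d),
        (-1 : ℝ) ^ (d - S.card) * C (fun k => if k ∈ S then b k else a k))

/-!
Assume `u i ≤ u j` and let `w` be `u` with its `j`-th coordinate lowered to `u i`. Then `u` and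
`u ∘ swap i j` both arise from `w` by raising a single coordinate (`j`, resp. `i`) from `u i` to
`u j`. A copula is nondecreasing and `1`-Lipschitz in each coordinate, so `C u` and
`C (u ∘ swap i j)` both lie in `[C w, C w + (u j - u i)]`.

Both one-coordinate facts come from the `d`-increasing condition: by groundedness, the volume of a
box whose lower corner vanishes outside `K` is the `#K`-dimensional volume of its face on which
the coordinates outside `K` sit at the upper corner. For `K = {k}` this gives monotonicity; for
`K = {i, j}` it shows that the increment of `C` in coordinate `i` grows with every other
coordinate, so it is at most the increment with all other coordinates equal to `1`, which the
margin condition computes as `t - s`.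
-/

open Finset Function

local notation "𝕀" => Set.Icc (0 : ℝ) 1

theorem forall_update_mem {ι α : Type*} [DecidableEq ι] {x : ι → α} {S : Set α}
    (hx : ∀ m, x m ∈ S) (k : ι) {r : α} (hr : r ∈ S) : ∀ m, update x k r m ∈ S :=
  (forall_update_iff x fun _ v => v ∈ S).2 ⟨hr, fun m _ => hx m⟩

namespace IsCopula

variable {d : ℕ} {C : (Fin d → ℝ) → ℝ}

theorem volume_eq_sum_powerset (hC : IsCopula d C) {a b : Fin d → ℝ}
    (ha : ∀ m, a m ∈ 𝕀) (hb : ∀ m, b m ∈ 𝕀)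
    (K : Finset (Fin d)) (haK : ∀ m ∉ K, a m = 0) :
    ∑ S : Finset (Fin d), (-1 : ℝ) ^ (d - #S) * C (S.piecewise b a) =
      ∑ T ∈ K.powerset, (-1 : ℝ) ^ (#K - #T) * C ((T ∪ Kᶜ).piecewise b a) := by
  have hinj : ∀ T ∈ K.powerset, ∀ T' ∈ K.powerset, T ∪ Kᶜ = T' ∪ Kᶜ → T = T' := by
    intro T hT T' hT' h
    rw [mem_powerset] at hT hT'
    ext m
    by_cases hm : m ∈ K
    · simpa [hm] using congrArg (m ∈ ·) h
    · exact iff_of_false (fun h => hm (hT h)) (fun h => hm (hT' h))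
  have hcard : ∀ T ∈ K.powerset, d - #(T ∪ Kᶜ) = #K - #T := by
    intro T hT
    have hTK := card_le_card (mem_powerset.1 hT)
    have hKd : #K ≤ d := by simpa using card_le_univ K
    rw [card_union_of_disjoint (disjoint_compl_right.mono_left (mem_powerset.1 hT)), card_compl,
      Fintype.card_fin]
    omega
  have hvanish : ∀ S ∉ K.powerset.image (· ∪ Kᶜ), C (S.piecewise b a) = 0 := by
    intro S hS
    obtain ⟨m, hmK, hmS⟩ : ∃ m ∉ K, m ∉ S := by
      by_contra! h
      refine hS (mem_image.2 ⟨S ∩ K, mem_powerset.2 inter_subset_right, ?_⟩)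
      ext m
      by_cases hm : m ∈ K <;> simp [hm, h]
    exact hC.1 _ (fun i => S.piecewise_cases b a (· ∈ 𝕀) (hb i) (ha i))
      ⟨m, by simp [hmS, haK m hmK]⟩
  calc ∑ S : Finset (Fin d), (-1 : ℝ) ^ (d - #S) * C (S.piecewise b a)
      = ∑ S ∈ K.powerset.image (· ∪ Kᶜ), (-1 : ℝ) ^ (d - #S) * C (S.piecewise b a) :=
        (sum_subset (subset_univ _) fun S _ hS => by rw [hvanish S hS, mul_zero]).symm
    _ = _ := sum_image hinj
    _ = _ := sum_congr rfl fun T hT => by rw [hcard T hT]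

theorem sum_powerset_nonneg (hC : IsCopula d C) {a b : Fin d → ℝ}
    (ha : ∀ m, a m ∈ 𝕀) (hb : ∀ m, b m ∈ 𝕀) (hab : a ≤ b)
    (K : Finset (Fin d)) (haK : ∀ m ∉ K, a m = 0) :
    0 ≤ ∑ T ∈ K.powerset, (-1 : ℝ) ^ (#K - #T) * C ((T ∪ Kᶜ).piecewise b a) :=
  hC.volume_eq_sum_powerset ha hb K haK ▸ hC.2.2 a b ha hb hab

theorem update_le_update (hC : IsCopula d C) {x : Fin d → ℝ} (hx : ∀ m, x m ∈ 𝕀)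
    (k : Fin d) {s t : ℝ} (hs : s ∈ 𝕀) (ht : t ∈ 𝕀) (hst : s ≤ t) :
    C (update x k s) ≤ C (update x k t) := by
  have hvol := hC.sum_powerset_nonneg (a := update 0 k s)
    (forall_update_mem (fun _ => by simp) k hs) (forall_update_mem hx k ht)
    (update_le_update_iff.2 ⟨hst, fun m _ => (hx m).1⟩) (insert k ∅) fun m hm => by simp_all
  have hv : ∀ T : Finset (Fin d),
      (T ∪ (insert k ∅)ᶜ).piecewise (update x k t) (update 0 k s) =
        update x k (if k ∈ T then t else s) := by
    intro T
    ext m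
    rcases eq_or_ne m k with rfl | h <;> by_cases hmT : m ∈ T <;> simp_all
  simp only [sum_powerset_insert (notMem_empty k), powerset_empty, sum_singleton, hv] at hvol
  simpa using hvol

theorem two_increasing (hC : IsCopula d C) {x : Fin d → ℝ} (hx : ∀ m, x m ∈ 𝕀)
    {i j : Fin d} (hij : i ≠ j) {s t w w' : ℝ} (hs : s ∈ 𝕀)
    (ht : t ∈ 𝕀) (hw : w ∈ 𝕀) (hw' : w' ∈ 𝕀)
    (hst : s ≤ t) (hww' : w ≤ w') :
    C (update (update x j w) i t) - C (update (update x j w) i s) ≤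
      C (update (update x j w') i t) - C (update (update x j w') i s) := by
  set a : Fin d → ℝ := update (update 0 j w) i s
  set b : Fin d → ℝ := update (update x j w') i t
  have hab : a ≤ b :=
    update_le_update_iff.2
      ⟨hst, fun m _ => update_le_update_iff.2 ⟨hww', fun m _ => (hx m).1⟩ m⟩
  have hvol := hC.sum_powerset_nonneg (a := a) (b := b)
    (forall_update_mem (forall_update_mem (fun _ => by simp) j hw) i hs)
    (forall_update_mem (forall_update_mem hx j hw') i ht) hab (insert i (insert j ∅))
    fun m hm => by simp_all [a]
  have hv : ∀ T : Finset (Fin d), (T ∪ (insert i (insert j ∅))ᶜ).piecewise b a =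
      update (update x j (if j ∈ T then w' else w)) i (if i ∈ T then t else s) := by
    intro T
    ext m
    rcases eq_or_ne m i with rfl | hi <;> rcases eq_or_ne m j with rfl | hj <;>
      by_cases hmT : m ∈ T <;> simp_all [a, b]
  simp only [sum_powerset_insert (by simpa using hij : i ∉ insert j ∅),
    sum_powerset_insert (notMem_empty j), powerset_empty, sum_singleton, hv] at hvol
  simp [hij, hij.symm] at hvol
  linarith

theorem update_sub_update_le (hC : IsCopula d C) {x : Fin d → ℝ}
    (hx : ∀ m, x m ∈ 𝕀) (k : Fin d) {s t : ℝ} (hs : s ∈ 𝕀)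
    (ht : t ∈ 𝕀) (hst : s ≤ t) :
    C (update x k t) - C (update x k s) ≤ t - s := by
  have hraise : ∀ A : Finset (Fin d), C (update x k t) - C (update x k s) ≤
      C (update (A.piecewise 1 x) k t) - C (update (A.piecewise 1 x) k s) := by
    intro A
    induction A using Finset.induction_on with
    | empty => simp
    | insert m A hmA ih =>
      refine ih.trans ?_
      rw [piecewise_insert]
      set y := A.piecewise 1 x
      have hy : ∀ m, y m ∈ 𝕀 :=
        fun m => A.piecewise_cases 1 x (· ∈ 𝕀) (by simp) (hx m)
      rcases eq_or_ne k m with rfl | hkm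
      · simp
      · simpa [update_eq_self] using
          hC.two_increasing hy hkm hs ht (hy m) (by simp) hst (hy m).2
  have hmargin : ∀ r ∈ 𝕀, C (update 1 k r) = r := fun r hr => by
    simpa using hC.2.1 _ (forall_update_mem (fun _ => by simp) k hr) k fun m hm => by simp [hm]
  simpa [hmargin s hs, hmargin t ht] using hraise univ

theorem update_mem_Icc (hC : IsCopula d C) {x : Fin d → ℝ} (hx : ∀ m, x m ∈ 𝕀)
    (k : Fin d) {s t : ℝ} (hs : s ∈ 𝕀) (ht : t ∈ 𝕀) (hst : s ≤ t) :
    C (update x k t) ∈ Set.Icc (C (update x k s)) (C (update x k s) + (t - s)) :=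
  ⟨hC.update_le_update hx k hs ht hst, by linarith [hC.update_sub_update_le hx k hs ht hst]⟩

end IsCopula

theorem transposition_bound (d : ℕ)
    (C : (Fin d → ℝ) → ℝ) (hC : IsCopula d C)
    (u : Fin d → ℝ) (hu : ∀ i, u i ∈ Set.Icc (0:ℝ) 1)
    (i j : Fin d) :
    |C u - C (u ∘ Equiv.swap i j)| ≤ |u i - u j| := by
  wlog hle : u i ≤ u j generalizing i j
  · simpa [Equiv.swap_comm, abs_sub_comm] using this j i (le_of_not_ge hle)
  set w := update u j (u i)
  have hw : ∀ m, w m ∈ 𝕀 := forall_update_mem hu j (hu i)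
  have hu_mem := hC.update_mem_Icc hw j (hu i) (hu j) hle
  have hswap_mem := hC.update_mem_Icc hw i (hu i) (hu j) hle
  have hw_j : update w j (u i) = w := by simp [w]
  have hw_i : update w i (u i) = w := by rw [update_eq_self_iff]; simp [w, update_apply]
  have hu_eq : update w j (u j) = u := by simp [w]
  have hswap_eq : update w i (u j) = u ∘ Equiv.swap i j := by
    ext m
    rcases eq_or_ne m i with rfl | hi
    · simp [w]
    rcases eq_or_ne m j with rfl | hj
    · simp [w, hi]
    simp [w, hi, hj, Equiv.swap_apply_of_ne_of_ne hi hj]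
  rw [hw_j, hu_eq] at hu_mem
  rw [hw_i, hswap_eq] at hswap_mem
  calc |C u - C (u ∘ Equiv.swap i j)| ≤ C w + (u j - u i) - C w :=
        Real.dist_le_of_mem_Icc hu_mem hswap_mem
    _ = |u i - u j| := by rw [abs_sub_comm, abs_of_nonneg (sub_nonneg.2 hle)]; ring
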